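/- Let (X,d) be a sequentially Yoneda-complete T1 bounded quasi-metric space such that every compact subset of (X, τ_d) is d⁻¹-precompact. Then the map φ : K_0(X) → CBX, φ(K) = K*, is a topological embedding (injective, continuous, and a homeomorphism onto its image) from K_0(X) equipped with the topology induced by the Hausdorff quasi-metric H_d (basic open balls {L : H_d(K,L) < ε}) into CBX equipped with the Scott topology. -/

import Mathlib

open scoped NNReal

/-! Generic sequence notions for an arbitrary "distance" function `ρ`. -/

def IsCauchySeq {α : Type _} (ρ : α → α → ℝ) (u : ℕ → α) : Prop :=
  ∀ ε : ℝ, 0 < ε → ∃ N, ∀ n m, N ≤ n → n ≤ m → ρ (u n) (u m) < ε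

def IsBiCauchySeq {α : Type _} (ρ : α → α → ℝ) (u : ℕ → α) : Prop :=
  ∀ ε : ℝ, 0 < ε → ∃ N, ∀ n m, N ≤ n → N ≤ m → ρ (u n) (u m) < ε

/-- `sup_{m ≥ n} ρ (u m) y`. -/
noncomputable def supTail {α : Type _} (ρ : α → α → ℝ) (u : ℕ → α) (y : α) (n : ℕ) : ℝ :=
  sSup {t | ∃ m, n ≤ m ∧ t = ρ (u m) y}

/-- `x` is a Yoneda limit of `u`:  `ρ x y = inf_n sup_{m ≥ n} ρ (u m) y` for all `y`. -/
def IsYonedaLim {α : Type _} (ρ : α → α → ℝ) (u : ℕ → α) (x : α) : Prop :=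
  ∀ y, ρ x y = sInf (Set.range (supTail ρ u y))

def SeqYonedaCompleteD {α : Type _} (ρ : α → α → ℝ) : Prop :=
  ∀ u, IsCauchySeq ρ u → ∃ x, IsYonedaLim ρ u x

/-- Smyth completeness: every Cauchy sequence converges in the symmetrized metric. -/
def SmythCompleteD {α : Type _} (ρ : α → α → ℝ) : Prop :=
  ∀ u, IsCauchySeq ρ u → ∃ x, ∀ ε : ℝ, 0 < ε → ∃ N, ∀ n, N ≤ n →
    max (ρ x (u n)) (ρ (u n) x) < ε

/-- `inf_{m ≥ n} ρ e (u m)`. -/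
noncomputable def infTail {α : Type _} (ρ : α → α → ℝ) (u : ℕ → α) (e : α) (n : ℕ) : ℝ :=
  sInf {t | ∃ m, n ≤ m ∧ t = ρ e (u m)}

/-- `e` is a finite point: for every Cauchy sequence `u` with Yoneda limit `x`,
`ρ e x = sup_n inf_{m ≥ n} ρ e (u m)`. -/
def IsFinitePoint {α : Type _} (ρ : α → α → ℝ) (e : α) : Prop :=
  ∀ u x, IsCauchySeq ρ u → IsYonedaLim ρ u x →
    ρ e x = sSup (Set.range (infTail ρ u e))

/-- ω-algebraic: a countable set of finite points such that every point is a Yoneda limit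
of a Cauchy sequence of points from it. -/
def OmegaAlgebraicD {α : Type _} (ρ : α → α → ℝ) : Prop :=
  ∃ X0 : Set α, X0.Countable ∧ (∀ e ∈ X0, IsFinitePoint ρ e) ∧
    ∀ x, ∃ u : ℕ → α, (∀ n, u n ∈ X0) ∧ IsCauchySeq ρ u ∧ IsYonedaLim ρ u x

/-- A quasi-metric on `X`. -/
structure QuasiMetric (X : Type _) : Type _ where
  d : X → X → ℝ
  nonneg : ∀ x y, 0 ≤ d x y
  triangle : ∀ x y z, d x z ≤ d x y + d y z
  eq_iff : ∀ x y, x = y ↔ d x y = 0 ∧ d y x = 0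

/-- Formal balls over `X`. -/
abbrev FB (X : Type _) := X × ℝ≥0

/-- Nonempty finite subsets of the space of formal balls. -/
def PFin (X : Type _) : Type _ := {F : Set (FB X) // F.Finite ∧ F.Nonempty}

namespace QuasiMetric

variable {X : Type _} (Q : QuasiMetric X)

def IsT1 : Prop := ∀ x y, Q.d x y = 0 → x = y

def Bounded : Prop := ∃ C : ℝ, ∀ x y, Q.d x y ≤ C

def ball (x : X) (ε : ℝ) : Set X := {y | Q.d x y < ε}

/-- The topology `τ_d` induced by the quasi-metric. -/
def tau : TopologicalSpace X :=
  TopologicalSpace.generateFrom {s | ∃ x ε, 0 < ε ∧ s = Q.ball x ε}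

def dstar (x y : X) : ℝ := max (Q.d x y) (Q.d y x)

def SeqYonedaComplete : Prop := SeqYonedaCompleteD Q.d

def SmythComplete : Prop := SmythCompleteD Q.d

/-- `K` is `d⁻¹`-precompact. -/
def dInvPrecompact (K : Set X) : Prop :=
  ∀ ε : ℝ, 0 < ε → ∃ F : Set X, F.Finite ∧ F ⊆ K ∧ ∀ k ∈ K, ∃ x ∈ F, Q.d k x < ε

/-- The nonempty compact subsets of `(X, τ_d)`. -/
def K0 : Set (Set X) := {K | K.Nonempty ∧ @IsCompact X Q.tau K}

noncomputable def dPtSet (x : X) (B : Set X) : ℝ := sInf {t | ∃ b ∈ B, t = Q.d x b}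

noncomputable def dSetPt (A : Set X) (y : X) : ℝ := sInf {t | ∃ a ∈ A, t = Q.d a y}

/-- The Hausdorff quasi-metric. -/
noncomputable def Hd (A B : Set X) : ℝ :=
  max (sSup {t | ∃ b ∈ B, t = Q.dSetPt A b}) (sSup {t | ∃ a ∈ A, t = Q.dPtSet a B})

/-- Order on formal balls: `(x,r) ⊑ (y,s)  ↔  d x y ≤ r - s`. -/
def ble (a b : FB X) : Prop := Q.d a.1 b.1 ≤ (a.2 : ℝ) - (b.2 : ℝ)

/-- Auxiliary relation: `(x,r) ≺ (y,s)  ↔  d x y < r - s`. -/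
def blt (a b : FB X) : Prop := Q.d a.1 b.1 < (a.2 : ℝ) - (b.2 : ℝ)

def iota (x : X) : FB X := (x, 0)

/-- The quasi-metric `q` on formal balls. -/
noncomputable def q (a b : FB X) : ℝ :=
  max (Q.d a.1 b.1) |(a.2 : ℝ) - (b.2 : ℝ)| + ((b.2 : ℝ) - (a.2 : ℝ))

/-- The Egli–Milner relation `≺_EM` on nonempty finite sets of formal balls. -/
def em (F G : PFin X) : Prop :=
  (∀ b ∈ G.1, ∃ a ∈ F.1, Q.blt a b) ∧ (∀ a ∈ F.1, ∃ b ∈ G.1, Q.blt a b)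

/-- The non-strict Egli–Milner relation `⊑_EM`. -/
def emLE (F G : PFin X) : Prop :=
  (∀ a ∈ F.1, ∃ b ∈ G.1, Q.ble a b) ∧ (∀ b ∈ G.1, ∃ a ∈ F.1, Q.ble a b)

/-- `rF = max { r : (x,r) ∈ F }`. -/
noncomputable def rF (F : PFin X) : ℝ := sSup {t | ∃ p ∈ F.1, t = (p.2 : ℝ)}

/-- `δ(F,G) = min {(r-s) - d x y : (x,r) ∈ F, (y,s) ∈ G, (x,r) ≺ (y,s)}`. -/
noncomputable def delta (F G : PFin X) : ℝ :=
  sInf {t | ∃ a ∈ F.1, ∃ b ∈ G.1, Q.blt a b ∧ t = ((a.2 : ℝ) - (b.2 : ℝ)) - Q.d a.1 b.1}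

/-- The Hausdorff quasi-metric `H_q` on `P_fin(BX)` induced by `q`. -/
noncomputable def Hq (F G : PFin X) : ℝ :=
  max (sSup {t | ∃ a ∈ F.1, t = sInf {s | ∃ b ∈ G.1, s = Q.q a b}})
      (sSup {t | ∃ b ∈ G.1, t = sInf {s | ∃ a ∈ F.1, s = Q.q a b}})

/-- ω-chains in `(P_fin(BX), ≺_EM)`; `c n` plays the role of `F_{n+1}`. -/
def Chain : Type _ := {c : ℕ → PFin X // ∀ n, Q.em (c n) (c (n + 1))}

def chainLE (c c' : Q.Chain) : Prop := ∀ n, ∃ m, Q.em (c.1 n) (c'.1 m)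

def chainEquiv (c c' : Q.Chain) : Prop := Q.chainLE c c' ∧ Q.chainLE c' c

lemma blt_trans {a b c : FB X} (h1 : Q.blt a b) (h2 : Q.blt b c) : Q.blt a c := by
  have h3 := Q.triangle a.1 b.1 c.1
  unfold blt at h1 h2 ⊢
  linarith

lemma em_trans {F G H : PFin X} (h1 : Q.em F G) (h2 : Q.em G H) : Q.em F H := by
  constructor
  · intro b hb
    obtain ⟨a, ha, hab⟩ := h2.1 b hb
    obtain ⟨a', ha', h'⟩ := h1.1 a ha
    exact ⟨a', ha', Q.blt_trans h' hab⟩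
  · intro a ha
    obtain ⟨b, hb, hab⟩ := h1.2 a ha
    obtain ⟨c, hc, hbc⟩ := h2.2 b hb
    exact ⟨c, hc, Q.blt_trans hab hbc⟩

lemma chainLE_refl (c : Q.Chain) : Q.chainLE c c := fun n => ⟨n + 1, c.2 n⟩

lemma chainLE_trans {a b c : Q.Chain} (h1 : Q.chainLE a b) (h2 : Q.chainLE b c) :
    Q.chainLE a c := by
  intro n
  obtain ⟨m, hm⟩ := h1 n
  obtain ⟨k, hk⟩ := h2 m
  exact ⟨k, Q.em_trans hm hk⟩

def chainSetoid : Setoid Q.Chain where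
  r := Q.chainEquiv
  iseqv := ⟨fun c => ⟨Q.chainLE_refl c, Q.chainLE_refl c⟩,
    fun h => ⟨h.2, h.1⟩,
    fun h1 h2 => ⟨Q.chainLE_trans h1.1 h2.1, Q.chainLE_trans h2.2 h1.2⟩⟩

/-- The ω-Plotkin domain `CBX`: equivalence classes of ω-chains in `(P_fin(BX), ≺_EM)`. -/
def CBX : Type _ := Quotient Q.chainSetoid

/-- The partial order of `CBX`. -/
def cbLE : Q.CBX → Q.CBX → Prop :=
  Quotient.lift₂ Q.chainLE (by
    intro a b a' b' ha hb
    have ha' : Q.chainEquiv a a' := ha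
    have hb' : Q.chainEquiv b b' := hb
    exact propext ⟨fun h => Q.chainLE_trans (Q.chainLE_trans ha'.2 h) hb'.1,
      fun h => Q.chainLE_trans (Q.chainLE_trans ha'.1 h) hb'.2⟩)

def chainWB (c c' : Q.Chain) : Prop := ∃ m, ∀ n, Q.em (c.1 n) (c'.1 m)

/-- The way-below relation of `CBX`. -/
def cbWB : Q.CBX → Q.CBX → Prop :=
  Quotient.lift₂ Q.chainWB (by
    intro a b a' b' ha hb
    have ha' : Q.chainEquiv a a' := ha
    have hb' : Q.chainEquiv b b' := hb
    apply propext
    constructor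
    · rintro ⟨m, hm⟩
      obtain ⟨k, hk⟩ := hb'.1 m
      refine ⟨k, fun n => ?_⟩
      obtain ⟨p, hp⟩ := ha'.2 n
      exact Q.em_trans hp (Q.em_trans (hm p) hk)
    · rintro ⟨m, hm⟩
      obtain ⟨k, hk⟩ := hb'.2 m
      refine ⟨k, fun n => ?_⟩
      obtain ⟨p, hp⟩ := ha'.1 n
      exact Q.em_trans hp (Q.em_trans (hm p) hk))

/-- The Scott topology of `CBX`, generated by the sets `↟I`. -/
def scottTop : TopologicalSpace Q.CBX :=
  TopologicalSpace.generateFrom {s | ∃ I : Q.CBX, s = {J | Q.cbWB I J}}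

def upSet (F : PFin X) : Set (FB X) := {b | ∃ a ∈ F.1, Q.ble a b}

/-- `I⁺ = ⋂_n ↑F_n` for a representing chain. -/
def Iplus (c : Q.Chain) : Set (FB X) := ⋂ n, Q.upSet (c.1 n)

noncomputable def IplusQ (I : Q.CBX) : Set (FB X) := Q.Iplus (Quotient.out I)

/-- `r̄ I = inf { rF : F occurs in some chain representing I }`. -/
noncomputable def rbar (I : Q.CBX) : ℝ :=
  sInf {t | ∃ c : Q.Chain, Quotient.mk Q.chainSetoid c = I ∧ ∃ n, t = rF (c.1 n)}

/-- `c` is a standard representation of `K`: `c n` (playing the role of `F_{n+1}`) is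
`{(x_i^j, 1/(n+1)) : 1 ≤ j ≤ n+1, 1 ≤ i ≤ m_j}` where the `x_i^j ∈ K` satisfy
`∀ y ∈ K, ∃ i, d (x_i^j) y < 1/(2 j²)`. -/
def IsStdRep (K : Set X) (c : Q.Chain) : Prop :=
  ∃ (m : ℕ → ℕ) (x : ℕ → ℕ → X),
    (∀ j i, 1 ≤ j → 1 ≤ i → i ≤ m j → x j i ∈ K) ∧
    (∀ j, 1 ≤ j → ∀ y ∈ K, ∃ i, 1 ≤ i ∧ i ≤ m j ∧ Q.d (x j i) y < 1 / (2 * (j : ℝ) ^ 2)) ∧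
    (∀ n : ℕ, (c.1 n).1 =
      {p : FB X | ∃ j i, 1 ≤ j ∧ j ≤ n + 1 ∧ 1 ≤ i ∧ i ≤ m j ∧
        p = (x j i, ((n : ℝ≥0) + 1)⁻¹)})

/-- `D` on representing chains: `sup_n inf_m H_q(F_n, G_m)`. -/
noncomputable def Dchain (c c' : Q.Chain) : ℝ :=
  sSup {t | ∃ n, t = sInf {s | ∃ m, s = Q.Hq (c.1 n) (c'.1 m)}}

/-- The quasi-metric `D` on `CBX`. -/
noncomputable def D (I J : Q.CBX) : ℝ := Q.Dchain (Quotient.out I) (Quotient.out J)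

/-- The topology induced by `D` on `CBX`. -/
def DTop : TopologicalSpace Q.CBX :=
  TopologicalSpace.generateFrom
    {s | ∃ (I : Q.CBX) (ε : ℝ), 0 < ε ∧ s = {J | Q.D I J < ε}}

/-- The hyperspace `K_0(X)` as a type. -/
def K0T : Type _ := {K : Set X // K.Nonempty ∧ @IsCompact X Q.tau K}

/-- The Vietoris topology on `K_0(X)`. -/
def vietoris : TopologicalSpace Q.K0T :=
  TopologicalSpace.generateFrom
    ({s | ∃ V : Set X, @IsOpen X Q.tau V ∧ s = {K : Q.K0T | (K.1 ∩ V).Nonempty}} ∪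
     {s | ∃ V : Set X, @IsOpen X Q.tau V ∧ s = {K : Q.K0T | K.1 ⊆ V}})

/-- The topology of the Hausdorff quasi-metric on `K_0(X)`. -/
def hdTop : TopologicalSpace Q.K0T :=
  TopologicalSpace.generateFrom
    {s | ∃ (K : Q.K0T) (ε : ℝ), 0 < ε ∧ s = {L : Q.K0T | Q.Hd K.1 L.1 < ε}}

/-- Round ideals of `(P_fin(BX), ≺_EM)`. -/
def IsRoundIdeal (I : Set (PFin X)) : Prop :=
  I.Nonempty ∧ (∀ F G : PFin X, Q.em F G → G ∈ I → F ∈ I) ∧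
  (∀ F ∈ I, ∀ G ∈ I, ∃ H ∈ I, Q.em F H ∧ Q.em G H)

end QuasiMetric

/-!
Represent each `K` by a standard representation whose `n`-th level consists of balls of radius
`1/(n+1)` centred at a two-sided `1/(2(n+1)²)`-net of `K`: a `d`-net comes from compactness, a
`d⁻¹`-net from `d⁻¹`-precompactness. Such levels are automatically Egli–Milner increasing.

* Injectivity: if `K* ⊑ L*`, every point of `L` is a `d`-limit of centres lying in `K`, so it lies
  in `K` because `K` is compact and `d` is T1.
* Continuity: if `I ≪ K*` is witnessed at level `m`, the triangle inequality shows that `I ≪ L*`,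
  at level `8m + 8`, as soon as `H_d(K, L) < 1/(4(m+1))`.
* Openness: if `H_d(K, L₀) < ε`, enlarging every radius of `L₀*` by a small `δ` yields `I ≪ L₀*`,
  and `I ≪ L*` forces `H_d(K, L) ≤ H_d(K, L₀) + 4δ`.
-/

open Set Topology

lemma Set.Finite.exists_image_Icc_eq {α : Type*} [Nonempty α] {S : Set α} (hS : S.Finite) :
    ∃ (k : ℕ) (f : ℕ → α), f '' Icc 1 k = S := by
  obtain ⟨k, g, -, hg⟩ := hS.fin_param
  refine ⟨k, fun i => if h : i - 1 < k then g ⟨i - 1, h⟩ else Classical.arbitrary α, ?_⟩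
  rw [← hg]
  ext s
  constructor
  · rintro ⟨i, ⟨hi1, hi2⟩, rfl⟩
    exact ⟨⟨i - 1, by omega⟩, by simp only [show i - 1 < k by omega, dite_true]⟩
  · rintro ⟨⟨i, hi⟩, rfl⟩
    exact ⟨i + 1, ⟨by omega, by omega⟩, by simp [hi]⟩

lemma exists_inv_add_one_lt {δ : ℝ} (hδ : 0 < δ) : ∃ n : ℕ, ((n : ℝ) + 1)⁻¹ < δ := by
  obtain ⟨n, hn⟩ := exists_nat_gt δ⁻¹
  exact ⟨n, (inv_lt_comm₀ (by positivity) hδ).2 (hn.trans (lt_add_one _))⟩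

lemma inv_two_mul_sq_le_inv {u : ℝ} (hu : 1 ≤ u) : (2 * u ^ 2)⁻¹ ≤ u⁻¹ :=
  inv_anti₀ (by positivity) (by nlinarith)

lemma inv_two_mul_sq_le_inv_sub_inv {u : ℝ} (hu : 1 ≤ u) :
    (2 * u ^ 2)⁻¹ ≤ u⁻¹ - (u + 1)⁻¹ := by
  rw [inv_sub_inv (by positivity) (by positivity), add_sub_cancel_left, one_div]
  exact inv_anti₀ (by positivity) (by nlinarith)

lemma inv_two_mul_sq_add_inv_four_mul_add_inv_le {u : ℝ} (hu : 1 ≤ u) :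
    (2 * u ^ 2)⁻¹ + (4 * u)⁻¹ + (8 * u + 1)⁻¹ ≤ u⁻¹ := by
  have h0 : 0 < u := by linarith
  have h1 : (2 * u ^ 2)⁻¹ ≤ (2 * u)⁻¹ := inv_anti₀ (by positivity) (by nlinarith)
  have h2 : (8 * u + 1)⁻¹ ≤ (8 * u)⁻¹ := inv_anti₀ (by positivity) (by linarith)
  have h3 : (2 * u)⁻¹ + (4 * u)⁻¹ + (8 * u)⁻¹ ≤ u⁻¹ := by
    rw [mul_inv, mul_inv, mul_inv]
    nlinarith [inv_nonneg.2 h0.le]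
  linarith

lemma inv_four_mul_add_inv_two_mul_sq_add_inv_le {u : ℝ} (hu : 1 ≤ u) :
    (4 * u)⁻¹ + (2 * (8 * u + 1) ^ 2)⁻¹ + (8 * u + 1)⁻¹ ≤ u⁻¹ := by
  have h0 : 0 < u := by linarith
  have h1 : (2 * (8 * u + 1) ^ 2)⁻¹ ≤ (8 * u)⁻¹ := inv_anti₀ (by positivity) (by nlinarith)
  have h2 : (8 * u + 1)⁻¹ ≤ (8 * u)⁻¹ := inv_anti₀ (by positivity) (by linarith)
  have h3 : (4 * u)⁻¹ + (8 * u)⁻¹ + (8 * u)⁻¹ ≤ u⁻¹ := by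
    rw [mul_inv, mul_inv]
    nlinarith [inv_nonneg.2 h0.le]
  linarith

namespace QuasiMetric

variable {X : Type} (Q : QuasiMetric X)

lemma d_self (x : X) : Q.d x x = 0 := ((Q.eq_iff x x).mp rfl).1

lemma isOpen_ball (x : X) {ε : ℝ} (hε : 0 < ε) : IsOpen[Q.tau] (Q.ball x ε) :=
  TopologicalSpace.isOpen_generateFrom_of_mem ⟨x, ε, hε, rfl⟩

lemma ball_mem_nhds (x : X) {ε : ℝ} (hε : 0 < ε) : Q.ball x ε ∈ @nhds X Q.tau x :=
  @IsOpen.mem_nhds X Q.tau _ _ (Q.isOpen_ball x hε) (by simpa [ball, Q.d_self] using hε)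

lemma mem_of_forall_exists_d_lt (hT1 : Q.IsT1) {K : Set X} (hK : @IsCompact X Q.tau K) {x : X}
    (h : ∀ ε > 0, ∃ w ∈ K, Q.d w x < ε) : x ∈ K := by
  let _ : TopologicalSpace X := Q.tau
  by_contra hx
  have hpos : ∀ y ∈ K, 0 < Q.d y x := fun y hy =>
    (Q.nonneg y x).lt_of_ne fun h => hx (hT1 y x h.symm ▸ hy)
  -- As `d y x > 0` on `K`, the balls `ball y (d y x / 2)` cover `K`; grouping them by a lower
  -- bound `1/(n+1)` on `d y x` makes the cover directed.
  let U : ℕ → Set X := fun n => ⋃ (y) (_ : ((n : ℝ) + 1)⁻¹ < Q.d y x), Q.ball y (Q.d y x / 2)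
  have hUo : ∀ n, IsOpen (U n) := fun n =>
    isOpen_iUnion fun y => isOpen_iUnion fun hy =>
      Q.isOpen_ball y (by linarith [inv_pos.2 (by positivity : (0 : ℝ) < n + 1)])
  have hcover : K ⊆ ⋃ n, U n := by
    intro z hz
    obtain ⟨n, hn⟩ := exists_inv_add_one_lt (hpos z hz)
    exact mem_iUnion.2 ⟨n, mem_iUnion₂.2 ⟨z, hn, by simp [ball, Q.d_self, hpos z hz]⟩⟩
  have hmono : Monotone U := by
    intro n m hnm z hz
    obtain ⟨y, hy, hzy⟩ := mem_iUnion₂.1 hz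
    refine mem_iUnion₂.2 ⟨y, lt_of_le_of_lt ?_ hy, hzy⟩
    gcongr
  obtain ⟨N, hN⟩ := hK.elim_directed_cover U hUo hcover hmono.directed_le
  obtain ⟨w, hwK, hw⟩ := h (((N : ℝ) + 1)⁻¹ / 2) (by positivity)
  obtain ⟨y, hy, hwy⟩ := mem_iUnion₂.1 (hN hwK)
  have hwy : Q.d y w < Q.d y x / 2 := hwy
  linarith [Q.triangle y w x]


lemma dSetPt_le {A : Set X} {a : X} (ha : a ∈ A) (y : X) : Q.dSetPt A y ≤ Q.d a y :=
  csInf_le ⟨0, by rintro t ⟨a', -, rfl⟩; exact Q.nonneg _ _⟩ ⟨a, ha, rfl⟩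

lemma dPtSet_le {B : Set X} {b : X} (hb : b ∈ B) (x : X) : Q.dPtSet x B ≤ Q.d x b :=
  csInf_le ⟨0, by rintro t ⟨b', -, rfl⟩; exact Q.nonneg _ _⟩ ⟨b, hb, rfl⟩

section Hausdorff

variable {C : ℝ} (hC : ∀ x y, Q.d x y ≤ C) {A B : Set X}
include hC

lemma exists_d_lt_of_Hd_lt_of_mem_right (hA : A.Nonempty) {b : X} (hb : b ∈ B) {r : ℝ}
    (h : Q.Hd A B < r) : ∃ a ∈ A, Q.d a b < r := by
  have hbdd : BddAbove {t | ∃ b' ∈ B, t = Q.dSetPt A b'} := by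
    refine ⟨C, ?_⟩
    rintro t ⟨b', -, rfl⟩
    exact (Q.dSetPt_le hA.some_mem b').trans (hC _ _)
  have hlt : Q.dSetPt A b < r :=
    ((le_csSup hbdd ⟨b, hb, rfl⟩).trans (le_max_left _ _)).trans_lt h
  obtain ⟨t, ⟨a, ha, rfl⟩, hat⟩ := exists_lt_of_csInf_lt
    (s := {t | ∃ a ∈ A, t = Q.d a b}) ⟨_, hA.some, hA.some_mem, rfl⟩ hlt
  exact ⟨a, ha, hat⟩

lemma exists_d_lt_of_Hd_lt_of_mem_left (hB : B.Nonempty) {a : X} (ha : a ∈ A) {r : ℝ}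
    (h : Q.Hd A B < r) : ∃ b ∈ B, Q.d a b < r := by
  have hbdd : BddAbove {t | ∃ a' ∈ A, t = Q.dPtSet a' B} := by
    refine ⟨C, ?_⟩
    rintro t ⟨a', -, rfl⟩
    exact (Q.dPtSet_le hB.some_mem a').trans (hC _ _)
  have hlt : Q.dPtSet a B < r :=
    ((le_csSup hbdd ⟨a, ha, rfl⟩).trans (le_max_right _ _)).trans_lt h
  obtain ⟨t, ⟨b, hb, rfl⟩, hbt⟩ := exists_lt_of_csInf_lt
    (s := {t | ∃ b ∈ B, t = Q.d a b}) ⟨_, hB.some, hB.some_mem, rfl⟩ hlt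
  exact ⟨b, hb, hbt⟩

end Hausdorff

lemma Hd_le {A B : Set X} (hA : A.Nonempty) (hB : B.Nonempty) {r : ℝ}
    (h₁ : ∀ b ∈ B, ∃ a ∈ A, Q.d a b ≤ r) (h₂ : ∀ a ∈ A, ∃ b ∈ B, Q.d a b ≤ r) :
    Q.Hd A B ≤ r := by
  refine max_le (csSup_le ⟨_, hB.some, hB.some_mem, rfl⟩ ?_)
    (csSup_le ⟨_, hA.some, hA.some_mem, rfl⟩ ?_)
  · rintro t ⟨b, hb, rfl⟩
    obtain ⟨a, ha, hab⟩ := h₁ b hb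
    exact (Q.dSetPt_le ha b).trans hab
  · rintro t ⟨a, ha, rfl⟩
    obtain ⟨b, hb, hab⟩ := h₂ a ha
    exact (Q.dPtSet_le hb a).trans hab

lemma Hd_self_le_zero {A : Set X} (hA : A.Nonempty) : Q.Hd A A ≤ 0 :=
  Q.Hd_le hA hA (fun b hb => ⟨b, hb, (Q.d_self b).le⟩) fun a ha => ⟨a, ha, (Q.d_self a).le⟩

def IsTwoSidedNet (K S : Set X) (ε : ℝ) : Prop :=
  S ⊆ K ∧ (∀ y ∈ K, ∃ s ∈ S, Q.d s y < ε) ∧ ∀ y ∈ K, ∃ s ∈ S, Q.d y s < ε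

lemma exists_finite_isTwoSidedNet {K : Set X} (hK : @IsCompact X Q.tau K)
    (hpre : Q.dInvPrecompact K) {ε : ℝ} (hε : 0 < ε) :
    ∃ S : Set X, S.Finite ∧ Q.IsTwoSidedNet K S ε := by
  obtain ⟨t, htK, hcover⟩ :=
    @IsCompact.elim_nhds_subcover X Q.tau K hK (Q.ball · ε) fun y _ => Q.ball_mem_nhds y hε
  obtain ⟨F, hF, hFK, hnet⟩ := hpre ε hε
  refine ⟨↑t ∪ F, t.finite_toSet.union hF, union_subset htK hFK, fun y hy => ?_, fun y hy => ?_⟩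
  · obtain ⟨s, hs, hys⟩ := mem_iUnion₂.1 (hcover hy)
    exact ⟨s, Or.inl hs, hys⟩
  · obtain ⟨s, hs, hys⟩ := hnet y hy
    exact ⟨s, Or.inr hs, hys⟩


def IsGoodLevel (K : Set X) (n : ℕ) (S : Set (FB X)) : Prop :=
  (∀ p ∈ S, (p.2 : ℝ) = ((n : ℝ) + 1)⁻¹) ∧
    Q.IsTwoSidedNet K (Prod.fst '' S) (2 * ((n : ℝ) + 1) ^ 2)⁻¹

/-- Unlike `IsStdRep`, this also asks the centres to form a `d⁻¹`-net; `d⁻¹`-precompactness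
makes standard representations with this property exist. -/
def IsGoodRep (K : Set X) (c : Q.Chain) : Prop := ∀ n, Q.IsGoodLevel K n (c.1 n).1

variable {Q}

lemma IsGoodLevel.nonempty {K : Set X} {n : ℕ} {S : Set (FB X)} (h : Q.IsGoodLevel K n S)
    (hK : K.Nonempty) : S.Nonempty := by
  obtain ⟨-, ⟨p, hp, -⟩, -⟩ := h.2.2.1 _ hK.some_mem
  exact ⟨p, hp⟩

lemma em_of_isGoodLevel {K : Set X} {n : ℕ} {F G : PFin X} (hF : Q.IsGoodLevel K n F.1)
    (hG : Q.IsGoodLevel K (n + 1) G.1) : Q.em F G := by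
  have hu : (1 : ℝ) ≤ n + 1 := le_add_of_nonneg_left n.cast_nonneg
  have hgap := inv_two_mul_sq_le_inv_sub_inv hu
  have hgap' : (2 * ((n : ℝ) + 1 + 1) ^ 2)⁻¹ ≤ (2 * ((n : ℝ) + 1) ^ 2)⁻¹ := by
    gcongr
    linarith
  constructor
  · intro b hb
    obtain ⟨-, ⟨a, ha, rfl⟩, hab⟩ := hF.2.2.1 b.1 (hG.2.1 ⟨b, hb, rfl⟩)
    refine ⟨a, ha, ?_⟩
    show Q.d a.1 b.1 < (a.2 : ℝ) - b.2
    rw [hF.1 a ha, hG.1 b hb]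
    push_cast
    linarith
  · intro a ha
    obtain ⟨-, ⟨b, hb, rfl⟩, hab⟩ := hG.2.2.2 a.1 (hF.2.1 ⟨a, ha, rfl⟩)
    refine ⟨b, hb, ?_⟩
    show Q.d a.1 b.1 < (a.2 : ℝ) - b.2
    rw [hF.1 a ha, hG.1 b hb]
    push_cast at hab ⊢
    linarith

variable (Q)

def stdLevel (k : ℕ → ℕ) (x : ℕ → ℕ → X) (n : ℕ) : Set (FB X) :=
  {p | ∃ j i, 1 ≤ j ∧ j ≤ n + 1 ∧ 1 ≤ i ∧ i ≤ k j ∧ p = (x j i, ((n : ℝ≥0) + 1)⁻¹)}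

lemma stdLevel_finite (k : ℕ → ℕ) (x : ℕ → ℕ → X) (n : ℕ) : (stdLevel k x n).Finite := by
  refine ((finite_Icc 1 (n + 1)).biUnion fun j _ => (finite_Icc 1 (k j)).biUnion
    fun i _ => finite_singleton (x j i, ((n : ℝ≥0) + 1)⁻¹)).subset ?_
  rintro p ⟨j, i, hj₁, hj₂, hi₁, hi₂, rfl⟩
  exact mem_biUnion ⟨hj₁, hj₂⟩ (mem_biUnion ⟨hi₁, hi₂⟩ rfl)

lemma isGoodLevel_stdLevel {K : Set X} {k : ℕ → ℕ} {x : ℕ → ℕ → X}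
    (hx : ∀ j, 1 ≤ j → Q.IsTwoSidedNet K (x j '' Icc 1 (k j)) (1 / (2 * (j : ℝ) ^ 2)))
    (n : ℕ) : Q.IsGoodLevel K n (stdLevel k x n) := by
  have hnet := hx (n + 1) (by omega)
  push_cast [one_div] at hnet
  -- The centres of index `j = n + 1` already form the required net.
  have hsub : x (n + 1) '' Icc 1 (k (n + 1)) ⊆ Prod.fst '' stdLevel k x n := by
    rintro _ ⟨i, ⟨hi₁, hi₂⟩, rfl⟩
    exact ⟨_, ⟨n + 1, i, by omega, le_rfl, hi₁, hi₂, rfl⟩, rfl⟩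
  refine ⟨?_, ?_, fun y hy => ?_, fun y hy => ?_⟩
  · rintro p ⟨j, i, -, -, -, -, rfl⟩
    simp
  · rintro _ ⟨p, ⟨j, i, hj, -, hi₁, hi₂, rfl⟩, rfl⟩
    exact (hx j hj).1 ⟨i, ⟨hi₁, hi₂⟩, rfl⟩
  · obtain ⟨s, hs, hsy⟩ := hnet.2.1 y hy
    exact ⟨s, hsub hs, hsy⟩
  · obtain ⟨s, hs, hys⟩ := hnet.2.2 y hy
    exact ⟨s, hsub hs, hys⟩

lemma exists_isStdRep_isGoodRep {K : Set X} (hne : K.Nonempty) (hK : @IsCompact X Q.tau K)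
    (hpre : Q.dInvPrecompact K) : ∃ c : Q.Chain, Q.IsStdRep K c ∧ Q.IsGoodRep K c := by
  have : Nonempty X := ⟨hne.some⟩
  have hnets : ∀ j : ℕ, ∃ (k : ℕ) (x : ℕ → X),
      1 ≤ j → Q.IsTwoSidedNet K (x '' Icc 1 k) (1 / (2 * (j : ℝ) ^ 2)) := by
    intro j
    rcases Nat.eq_zero_or_pos j with rfl | hj
    · exact ⟨0, fun _ => hne.some, by omega⟩
    obtain ⟨S, hS, hnet⟩ := Q.exists_finite_isTwoSidedNet hK hpre
      (ε := 1 / (2 * (j : ℝ) ^ 2)) (by positivity)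
    obtain ⟨k, x, hx⟩ := hS.exists_image_Icc_eq
    exact ⟨k, x, fun _ => hx ▸ hnet⟩
  choose k x hx using hnets
  have hgood := Q.isGoodLevel_stdLevel hx
  let c : Q.Chain := ⟨fun n => ⟨stdLevel k x n, stdLevel_finite k x n, (hgood n).nonempty hne⟩,
    fun n => em_of_isGoodLevel (hgood n) (hgood (n + 1))⟩
  refine ⟨c, ⟨k, x, fun j i hj hi₁ hi₂ => (hx j hj).1 ⟨i, ⟨hi₁, hi₂⟩, rfl⟩,
    fun j hj y hy => ?_, fun n => rfl⟩, hgood⟩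
  obtain ⟨-, ⟨i, ⟨hi₁, hi₂⟩, rfl⟩, hiy⟩ := (hx j hj).2.1 y hy
  exact ⟨i, hi₁, hi₂, hiy⟩

variable {Q}

lemma subset_of_chainLE (hT1 : Q.IsT1) {K L : Set X} (hK : @IsCompact X Q.tau K)
    {cK cL : Q.Chain} (hcK : Q.IsGoodRep K cK) (hcL : Q.IsGoodRep L cL)
    (h : Q.chainLE cK cL) : L ⊆ K := by
  intro x hx
  refine Q.mem_of_forall_exists_d_lt hT1 hK fun ε hε => ?_
  obtain ⟨n, hn⟩ := exists_inv_add_one_lt hε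
  obtain ⟨m, hm⟩ := h n
  obtain ⟨-, ⟨p, hp, rfl⟩, hpx⟩ := (hcL m).2.2.1 x hx
  obtain ⟨a, ha, hap⟩ := hm.1 p hp
  have hap : Q.d a.1 p.1 < (a.2 : ℝ) - p.2 := hap
  rw [(hcK n).1 a ha, (hcL m).1 p hp] at hap
  refine ⟨a.1, (hcK n).2.1 ⟨a, ha, rfl⟩, ?_⟩
  have := inv_two_mul_sq_le_inv (le_add_of_nonneg_left m.cast_nonneg)
  linarith [Q.triangle a.1 p.1 x]

lemma chainWB_of_Hd_lt {C : ℝ} (hC : ∀ x y, Q.d x y ≤ C) {K L : Set X} (hKne : K.Nonempty)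
    (hLne : L.Nonempty) {cK cL c : Q.Chain} (hcK : Q.IsGoodRep K cK) (hcL : Q.IsGoodRep L cL)
    {m : ℕ} (hm : ∀ n, Q.em (c.1 n) (cK.1 m)) (hHd : Q.Hd K L < (4 * ((m : ℝ) + 1))⁻¹) :
    Q.chainWB c cL := by
  have hu : (1 : ℝ) ≤ m + 1 := le_add_of_nonneg_left m.cast_nonneg
  have hr : ((8 * m + 8 : ℕ) : ℝ) + 1 = 8 * ((m : ℝ) + 1) + 1 := by push_cast; ring
  refine ⟨8 * m + 8, fun n => ⟨fun b hb => ?_, fun a ha => ?_⟩⟩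
  · obtain ⟨w, hwK, hwb⟩ :=
      Q.exists_d_lt_of_Hd_lt_of_mem_right hC hKne ((hcL _).2.1 ⟨b, hb, rfl⟩) hHd
    obtain ⟨-, ⟨p, hp, rfl⟩, hpw⟩ := (hcK m).2.2.1 w hwK
    obtain ⟨a, ha, hap⟩ := (hm n).1 p hp
    have hap : Q.d a.1 p.1 < (a.2 : ℝ) - p.2 := hap
    rw [(hcK m).1 p hp] at hap
    refine ⟨a, ha, show Q.d a.1 b.1 < (a.2 : ℝ) - b.2 from ?_⟩
    rw [(hcL _).1 b hb, hr]
    linarith [Q.triangle a.1 p.1 b.1, Q.triangle p.1 w b.1,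
      inv_two_mul_sq_add_inv_four_mul_add_inv_le hu]
  · obtain ⟨p, hp, hap⟩ := (hm n).2 a ha
    have hap : Q.d a.1 p.1 < (a.2 : ℝ) - p.2 := hap
    rw [(hcK m).1 p hp] at hap
    obtain ⟨y, hyL, hpy⟩ :=
      Q.exists_d_lt_of_Hd_lt_of_mem_left hC hLne ((hcK m).2.1 ⟨p, hp, rfl⟩) hHd
    obtain ⟨-, ⟨q, hq, rfl⟩, hyq⟩ := (hcL _).2.2.2 y hyL
    rw [hr] at hyq
    refine ⟨q, hq, show Q.d a.1 q.1 < (a.2 : ℝ) - q.2 from ?_⟩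
    rw [(hcL _).1 q hq, hr]
    linarith [Q.triangle a.1 p.1 q.1, Q.triangle p.1 y q.1,
      inv_four_mul_add_inv_two_mul_sq_add_inv_le hu]

lemma blt_fatten {a b : FB X} (h : Q.blt a b) (δ : ℝ≥0) :
    Q.blt (a.1, a.2 + δ) (b.1, b.2 + δ) := by
  unfold blt at h ⊢
  push_cast
  linarith

def fattenPFin (F : PFin X) (δ : ℝ≥0) : PFin X :=
  ⟨(fun p : FB X => (p.1, p.2 + δ)) '' F.1, F.2.1.image _, F.2.2.image _⟩

lemma em_fatten {F G : PFin X} (h : Q.em F G) (δ : ℝ≥0) :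
    Q.em (fattenPFin F δ) (fattenPFin G δ) := by
  constructor
  · rintro _ ⟨b, hb, rfl⟩
    obtain ⟨a, ha, hab⟩ := h.1 b hb
    exact ⟨_, ⟨a, ha, rfl⟩, blt_fatten hab δ⟩
  · rintro _ ⟨a, ha, rfl⟩
    obtain ⟨b, hb, hab⟩ := h.2 a ha
    exact ⟨_, ⟨b, hb, rfl⟩, blt_fatten hab δ⟩

variable (Q) in
def fatten (c : Q.Chain) (δ : ℝ≥0) : Q.Chain :=
  ⟨fun n => fattenPFin (c.1 n) δ, fun n => em_fatten (c.2 n) δ⟩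

lemma mem_fatten {c : Q.Chain} {δ : ℝ≥0} {n : ℕ} {a : FB X} :
    a ∈ ((Q.fatten c δ).1 n).1 ↔ ∃ p ∈ (c.1 n).1, (p.1, p.2 + δ) = a :=
  Iff.rfl

lemma chainWB_fatten_self {L : Set X} {c : Q.Chain} (hc : Q.IsGoodRep L c) {δ : ℝ≥0}
    (hδ : 0 < δ) : Q.chainWB (Q.fatten c δ) c := by
  obtain ⟨m, hm⟩ := exists_inv_add_one_lt (show (0 : ℝ) < δ / 2 by positivity)
  refine ⟨m, fun n => ⟨fun b hb => ?_, ?_⟩⟩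
  · obtain ⟨-, ⟨p, hp, rfl⟩, hpb⟩ := (hc n).2.2.1 b.1 ((hc m).2.1 ⟨b, hb, rfl⟩)
    refine ⟨_, mem_fatten.2 ⟨p, hp, rfl⟩,
      show Q.d p.1 b.1 < ((p.2 + δ : ℝ≥0) : ℝ) - b.2 from ?_⟩
    rw [NNReal.coe_add, (hc n).1 p hp, (hc m).1 b hb]
    have := inv_two_mul_sq_le_inv (le_add_of_nonneg_left n.cast_nonneg)
    linarith
  · intro a ha
    obtain ⟨q, hq, rfl⟩ := mem_fatten.1 ha
    obtain ⟨-, ⟨p, hp, rfl⟩, hqp⟩ := (hc m).2.2.2 q.1 ((hc n).2.1 ⟨q, hq, rfl⟩)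
    refine ⟨p, hp, show Q.d q.1 p.1 < ((q.2 + δ : ℝ≥0) : ℝ) - p.2 from ?_⟩
    rw [NNReal.coe_add, (hc n).1 q hq, (hc m).1 p hp]
    have := inv_two_mul_sq_le_inv (le_add_of_nonneg_left m.cast_nonneg)
    have : (0 : ℝ) < ((n : ℝ) + 1)⁻¹ := by positivity
    linarith

lemma Hd_le_add_of_chainWB_fatten {C : ℝ} (hC : ∀ x y, Q.d x y ≤ C) {K L L' : Set X}
    (hKne : K.Nonempty) (hLne : L.Nonempty) (hL'ne : L'.Nonempty) {cL cL' : Q.Chain}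
    (hcL : Q.IsGoodRep L cL) (hcL' : Q.IsGoodRep L' cL') {δ : ℝ≥0} (hδ : 0 < δ)
    (h : Q.chainWB (Q.fatten cL δ) cL') : Q.Hd K L' ≤ Q.Hd K L + 4 * δ := by
  obtain ⟨m, hm⟩ := h
  obtain ⟨n, hn⟩ := exists_inv_add_one_lt (show (0 : ℝ) < δ by positivity)
  have hn' := inv_two_mul_sq_le_inv (le_add_of_nonneg_left n.cast_nonneg)
  have hm' := inv_two_mul_sq_le_inv (le_add_of_nonneg_left m.cast_nonneg)
  have hHd : Q.Hd K L < Q.Hd K L + δ := by simpa using hδ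
  refine Q.Hd_le hKne hL'ne (fun b hb => ?_) fun a ha => ?_
  · obtain ⟨-, ⟨z, hz, rfl⟩, hzb⟩ := (hcL' m).2.2.1 b hb
    obtain ⟨_, hmem, hqz⟩ := (hm n).1 z hz
    obtain ⟨q, hq, rfl⟩ := mem_fatten.1 hmem
    have hqz : Q.d q.1 z.1 < ((q.2 + δ : ℝ≥0) : ℝ) - z.2 := hqz
    rw [NNReal.coe_add, (hcL n).1 q hq, (hcL' m).1 z hz] at hqz
    obtain ⟨a, ha, haq⟩ :=
      Q.exists_d_lt_of_Hd_lt_of_mem_right hC hKne ((hcL n).2.1 ⟨q, hq, rfl⟩) hHd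
    exact ⟨a, ha, by linarith [Q.triangle a q.1 b, Q.triangle q.1 z.1 b]⟩
  · obtain ⟨y, hyL, hay⟩ := Q.exists_d_lt_of_Hd_lt_of_mem_left hC hLne ha hHd
    obtain ⟨-, ⟨q, hq, rfl⟩, hyq⟩ := (hcL n).2.2.2 y hyL
    obtain ⟨b, hb, hqb⟩ := (hm n).2 _ (mem_fatten.2 ⟨q, hq, rfl⟩)
    have hqb : Q.d q.1 b.1 < ((q.2 + δ : ℝ≥0) : ℝ) - b.2 := hqb
    rw [NNReal.coe_add, (hcL n).1 q hq, (hcL' m).1 b hb] at hqb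
    have : (0 : ℝ) < ((m : ℝ) + 1)⁻¹ := by positivity
    exact ⟨b.1, (hcL' m).2.1 ⟨b, hb, rfl⟩, by linarith [Q.triangle a y b.1, Q.triangle y q.1 b.1]⟩

variable (Q) in
def toCBX (c : Q.Chain) : Q.CBX := Quotient.mk Q.chainSetoid c

section Embedding

variable (rep : Q.K0T → Q.Chain)

lemma injective_toCBX_of_isGoodRep (hT1 : Q.IsT1) (hrep : ∀ K, Q.IsGoodRep K.1 (rep K)) :
    Function.Injective fun K => Q.toCBX (rep K) := by
  intro K L h
  have hKL : Q.chainEquiv (rep K) (rep L) := Quotient.exact h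
  exact Subtype.ext <| Subset.antisymm
    (subset_of_chainLE hT1 L.2.2 (hrep L) (hrep K) hKL.2)
    (subset_of_chainLE hT1 K.2.2 (hrep K) (hrep L) hKL.1)

variable {C : ℝ} (hC : ∀ x y, Q.d x y ≤ C) {rep} (hrep : ∀ K, Q.IsGoodRep K.1 (rep K))
include hC hrep

lemma isOpen_preimage_wayAbove (I : Q.CBX) :
    IsOpen[Q.hdTop] ((fun K => Q.toCBX (rep K)) ⁻¹' {J | Q.cbWB I J}) := by
  let _ := Q.hdTop
  induction I using Quotient.inductionOn with | h c => ?_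
  refine isOpen_iff_forall_mem_open.2 fun K hK => ?_
  obtain ⟨m, hm⟩ : Q.chainWB c (rep K) := hK
  refine ⟨{L | Q.Hd K.1 L.1 < (4 * ((m : ℝ) + 1))⁻¹},
    fun L hL => chainWB_of_Hd_lt hC K.2.1 L.2.1 (hrep K) (hrep L) hm hL,
    TopologicalSpace.isOpen_generateFrom_of_mem ⟨K, _, by positivity, rfl⟩, ?_⟩
  exact (Q.Hd_self_le_zero K.2.1).trans_lt (by positivity)

lemma isOpen_induced_setOf_Hd_lt (K : Q.K0T) (ε : ℝ) :
    IsOpen[TopologicalSpace.induced (fun K => Q.toCBX (rep K)) Q.scottTop]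
      {L : Q.K0T | Q.Hd K.1 L.1 < ε} := by
  let _ := Q.scottTop
  let _ := TopologicalSpace.induced (fun K => Q.toCBX (rep K)) Q.scottTop
  refine isOpen_iff_forall_mem_open.2 fun L₀ (hL₀ : Q.Hd K.1 L₀.1 < ε) => ?_
  obtain ⟨δ, hδ, hδε⟩ : ∃ δ : ℝ, 0 < δ ∧ Q.Hd K.1 L₀.1 + 4 * δ < ε :=
    ⟨(ε - Q.Hd K.1 L₀.1) / 5, by linarith, by linarith⟩
  lift δ to ℝ≥0 using hδ.le
  have hδ : 0 < δ := by exact_mod_cast hδ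
  refine ⟨_, fun L hL => ?_, isOpen_induced (TopologicalSpace.isOpen_generateFrom_of_mem
    ⟨Q.toCBX (Q.fatten (rep L₀) δ), rfl⟩), chainWB_fatten_self (hrep L₀) hδ⟩
  exact (Hd_le_add_of_chainWB_fatten hC K.2.1 L₀.2.1 L.2.1 (hrep L₀) (hrep L) hδ hL).trans_lt
    hδε

lemma hdTop_eq_induced :
    Q.hdTop = TopologicalSpace.induced (fun K => Q.toCBX (rep K)) Q.scottTop := by
  refine le_antisymm ?_ (le_generateFrom ?_)
  · rw [scottTop, induced_generateFrom_eq]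
    refine le_generateFrom ?_
    rintro _ ⟨_, ⟨I, rfl⟩, rfl⟩
    exact isOpen_preimage_wayAbove hC hrep I
  · rintro _ ⟨K, ε, -, rfl⟩
    exact isOpen_induced_setOf_Hd_lt hC hrep K ε

end Embedding

end QuasiMetric

theorem stmt10_general {X : Type} (Q : QuasiMetric X) (hT1 : Q.IsT1) (hB : Q.Bounded)
    (hpre : ∀ K : Set X, @IsCompact X Q.tau K → Q.dInvPrecompact K)
    (φ : Q.K0T → Q.CBX)
    (hφ : ∀ (K : Q.K0T) (c : Q.Chain), Q.IsStdRep K.1 c →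
      φ K = Quotient.mk Q.chainSetoid c) :
    Function.Injective φ ∧ (@Continuous _ _ Q.hdTop Q.scottTop φ) ∧
      Q.hdTop = TopologicalSpace.induced φ Q.scottTop := by
  obtain ⟨C, hC⟩ := hB
  choose rep hstd hgood using fun K : Q.K0T =>
    Q.exists_isStdRep_isGoodRep K.2.1 K.2.2 (hpre K.1 K.2.2)
  obtain rfl : φ = fun K => Q.toCBX (rep K) :=
    funext fun K => hφ K (rep K) (hstd K)
  have htop := QuasiMetric.hdTop_eq_induced hC hgood
  exact ⟨QuasiMetric.injective_toCBX_of_isGoodRep rep hT1 hgood,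
    continuous_iff_le_induced.2 htop.le, htop⟩

/-- if moreover every compact subset of `(X, τ_d)` is `d⁻¹`-precompact, then
`φ(K) = K*` is a topological embedding of `(K_0(X), H_d)` into `(CBX, σ)`. -/
theorem stmt10 {X : Type} (Q : QuasiMetric X) (hT1 : Q.IsT1) (hB : Q.Bounded)
    (hY : Q.SeqYonedaComplete)
    (hpre : ∀ K : Set X, @IsCompact X Q.tau K → Q.dInvPrecompact K)
    (φ : Q.K0T → Q.CBX)
    (hφ : ∀ (K : Q.K0T) (c : Q.Chain), Q.IsStdRep K.1 c →
      φ K = Quotient.mk Q.chainSetoid c) :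
    Function.Injective φ ∧ (@Continuous _ _ Q.hdTop Q.scottTop φ) ∧
      Q.hdTop = TopologicalSpace.induced φ Q.scottTop :=
  stmt10_general Q hT1 hB hpre φ hφ
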